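/- Let Γ be a rule set, R ∈ Γ a non-void leaf rule, and suppose D is consistent with I for R, with pruned configuration D' = D − x·(R_p − R_r) for the unique witnessing nonnegative integer x. Then D is reachable from I under Γ if and only if D' is reachable from I under Γ \ {R}. -/

import Mathlib

abbrev Config (Λ : Type*) := Λ → ℕ
abbrev Rule (Λ : Type*) := (Λ → ℕ) × (Λ → ℕ)

def Applicable {Λ : Type*} (R : Rule Λ) (C : Config Λ) : Prop := ∀ i, R.1 i ≤ C i

def applyRule {Λ : Type*} (R : Rule Λ) (C : Config Λ) : Config Λ :=
  fun i => C i + R.2 i - R.1 i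

def Step {Λ : Type*} (Γ : Set (Rule Λ)) (C C' : Config Λ) : Prop :=
  ∃ R ∈ Γ, Applicable R C ∧ C' = applyRule R C

def Reachable {Λ : Type*} (Γ : Set (Rule Λ)) : Config Λ → Config Λ → Prop :=
  Relation.ReflTransGen (Step Γ)

/-!
Since no other rule consumes a product of the leaf rule `R`, every firing of `R` in
a run can be postponed to the end of the run. A run `I → D` under `Γ` thus splits into a run
`I → E` avoiding `R` followed by `m` firings of `R`. Along the first part the products of `R`
keep their initial counts, so a species `j` with `R_r(j) < R_p(j)` forces `m = x`, and then
`E = D'`. Conversely, `I → D'` under `Γ \ {R}` extends by the `x` firings `D' → D`.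
-/

section

variable {Λ : Type*}

theorem Reachable.mono {Γ Γ' : Set (Rule Λ)} (h : Γ ⊆ Γ') {C D : Config Λ}
    (hCD : Reachable Γ C D) : Reachable Γ' C D :=
  Relation.ReflTransGen.mono (fun _ _ ⟨S, hS, hstep⟩ => ⟨S, h hS, hstep⟩) _ _ hCD

theorem Reachable.apply_eq_of_forall_fst_eq_snd {Γ : Set (Rule Λ)} {i : Λ}
    (hi : ∀ S ∈ Γ, S.1 i = S.2 i) {C E : Config Λ} (hCE : Reachable Γ C E) : E i = C i := by
  induction hCE with
  | refl => rfl
  | tail _ hstep ih =>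
    obtain ⟨S, hS, -, rfl⟩ := hstep
    simp only [applyRule, hi S hS, Nat.add_sub_cancel, ih]

/-- `hDC` says that `D` lies `m` net firings of `R` past `C`; a rule consuming no product of `R`
commutes with those firings. -/
theorem Applicable.of_add_mul {R S : Rule Λ} {C D : Config Λ} {m : ℕ}
    (hS : ∀ i, 0 < R.2 i → S.1 i = 0) (hDC : ∀ i, D i + m * R.1 i = C i + m * R.2 i)
    (hSD : Applicable S D) :
    Applicable S C ∧ ∀ i, applyRule S D i + m * R.1 i = applyRule S C i + m * R.2 i := by
  have hSC : Applicable S C := by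
    intro i
    rcases Nat.eq_zero_or_pos (R.2 i) with h | h
    · have := hDC i; have := hSD i; simp only [h, mul_zero] at *; omega
    · rw [hS i h]; exact Nat.zero_le _
  refine ⟨hSC, fun i => ?_⟩
  have := hDC i; have := hSD i; have := hSC i
  simp only [applyRule]
  omega

theorem Reachable.exists_reachable_sdiff_singleton {Γ : Set (Rule Λ)} {R : Rule Λ}
    (hleaf : ∀ S ∈ Γ, S ≠ R → ∀ i, 0 < R.2 i → S.1 i = 0) {I D : Config Λ}
    (hID : Reachable Γ I D) :
    ∃ m E, Reachable (Γ \ {R}) I E ∧ ∀ i, D i + m * R.1 i = E i + m * R.2 i := by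
  induction hID with
  | refl => exact ⟨0, I, .refl, fun i => by simp⟩
  | tail _ hstep ih =>
    obtain ⟨m, E, hIE, hDE⟩ := ih
    obtain ⟨S, hS, hSD, rfl⟩ := hstep
    by_cases hSR : S = R
    · subst hSR
      refine ⟨m + 1, E, hIE, fun i => ?_⟩
      have := hDE i; have := hSD i
      simp only [applyRule]
      rw [add_mul, add_mul]
      omega
    · obtain ⟨hSE, hres⟩ := hSD.of_add_mul (hleaf S hS hSR) hDE
      exact ⟨m, applyRule S E, hIE.tail ⟨S, ⟨hS, hSR⟩, hSE, rfl⟩, hres⟩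

theorem Nat.eq_of_add_mul_eq_add_mul {a b r p m x : ℕ} (hrp : r < p)
    (hm : a + m * r = b + m * p) (hx : a + x * r = b + x * p) : m = x := by
  nlinarith

end

/-- pruning: let `R ∈ Γ` be a non-void leaf rule (no product of `R` is a
reactant of any other rule of `Γ`, and no other rule of `Γ` produces a product species
of `R`), and suppose `D` is consistent with `I` for `R` with witnessing count `x` and
pruned configuration `D' = D - x·(R_p - R_r)` (stated additively), where `D'` agrees
with `I` on product species of `R` and `R` can be applied (x times) from `D'` to reach
`D`. Then `D` is reachable from `I` under `Γ` iff `D'` is reachable from `I` under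
`Γ \ {R}`. -/
theorem stmt6 {Λ : Type*} (Γ : Set (Rule Λ)) (R : Rule Λ) (hR : R ∈ Γ)
    (hleaf : ∀ R' ∈ Γ, R' ≠ R → ∀ i, R.2 i > 0 → R'.1 i = 0)
    (honly : ∀ R' ∈ Γ, R' ≠ R → ∀ i, R.2 i > 0 → R'.2 i = 0)
    (hnonvoid : ∃ i, R.1 i < R.2 i)
    (I D D' : Config Λ) (x : ℕ)
    (hprune : ∀ i, D i + x * R.1 i = D' i + x * R.2 i)
    (hagree : ∀ i, R.2 i ≠ 0 → D' i = I i)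
    (happ : Relation.ReflTransGen (Step ({R} : Set (Rule Λ))) D' D) :
    Reachable Γ I D ↔ Reachable (Γ \ {R}) I D' := by
  refine ⟨fun hID => ?_, fun hID' => ?_⟩
  · obtain ⟨m, E, hIE, hDE⟩ := hID.exists_reachable_sdiff_singleton hleaf
    obtain ⟨j, hj⟩ := hnonvoid
    have hEj : E j = I j := hIE.apply_eq_of_forall_fst_eq_snd fun S hS => by
      rw [hleaf S hS.1 hS.2 j (by omega), honly S hS.1 hS.2 j (by omega)]
    have hmx : m = x := Nat.eq_of_add_mul_eq_add_mul hj (hEj ▸ hDE j)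
      (hagree j (by omega) ▸ hprune j)
    have hED' : E = D' := funext fun i => by have := hDE i; have := hprune i; subst hmx; omega
    exact hED' ▸ hIE
  · exact (hID'.mono Set.sdiff_subset).trans
      (Reachable.mono (Set.singleton_subset_iff.2 hR) happ)
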